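/- Fix an n_t × n_t positive semidefinite matrix K̄ and channel matrices H_r, H_e. The function mapping a valid noise covariance K_Φ = [[I, Φ],[Φ†, I]] ⪰ 0 (with Φ The cross-covariance) to the conditional mutual information I(x; y_r | y_e), where x ~ CN(0, K̄), y_r = H_r x + z_r, y_e = H_e x + z_e, and (z_r, z_e) ~ CN(0, K_Φ), equals log det(K_Φ + H_t K̄ H_t†) − log det(K_Φ) − log det(I + H_e K̄ H_e†) when K_Φ is positive definite, where H_t = [H_r; H_e] is the stacked matrix. In particular this function is convex in K_Φ on the set of positive definite K_Φ with identity diagonal blocks. -/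

import Mathlib

/-!
Write the positive semidefinite matrix `H_t K̄ H_tᴴ` as `B Bᴴ`. Then
`log det (M + B Bᴴ) - log det M = -log det E(M)`, where `E(M) = 1 - Bᴴ (M + B Bᴴ)⁻¹ B` is the
least error covariance for estimating `x ~ CN(0, 1)` linearly from `B x + z`, `z ~ CN(0, M)`.
The error covariance of a fixed linear estimator is affine in `M` and dominates `E(M)`, with
equality for the LMMSE estimator; with concavity of `log det` this exhibits `-log det E(M)` as
a pointwise supremum of convex functions of `M`. Concavity of `log det`, and monotonicity of `det`
under positive semidefinite increments, both follow by simultaneous diagonalisation of a pencil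
`(A, B)` with `A` positive definite.
-/

open Matrix
open scoped ComplexOrder

namespace Matrix

variable {𝕜 n m : Type*} [RCLike 𝕜]

lemma convex_setOf_posDef : Convex ℝ {A : Matrix n n 𝕜 | A.PosDef} :=
  convex_iff_forall_pos.mpr fun _ hA _ hB _ _ ha hb _ => (hA.smul ha).add (hB.smul hb)

lemma convex_setOf_exists_eq_fromBlocks_one [DecidableEq n] [DecidableEq m] :
    Convex ℝ {M : Matrix (n ⊕ m) (n ⊕ m) 𝕜 | ∃ Φ : Matrix n m 𝕜, M = fromBlocks 1 Φ Φᴴ 1} := by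
  rintro _ ⟨Φ₁, rfl⟩ _ ⟨Φ₂, rfl⟩ a b - - hab
  refine ⟨a • Φ₁ + b • Φ₂, ?_⟩
  simp [fromBlocks_smul, fromBlocks_add, ← add_smul, hab]

variable [Fintype n] [DecidableEq n]

lemma IsHermitian.det_cfc {C : Matrix n n 𝕜} (hC : C.IsHermitian) (f : ℝ → ℝ) :
    (cfc f C).det = ∏ i, (f (hC.eigenvalues i) : 𝕜) := by
  rw [hC.cfc_eq]
  simp [IsHermitian.cfc, -Unitary.conjStarAlgAut_apply]

lemma IsHermitian.det_smul_one_add_smul {C : Matrix n n 𝕜} (hC : C.IsHermitian) (a b : ℝ) :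
    (a • 1 + b • C).det = ∏ i, ((a + b * hC.eigenvalues i : ℝ) : 𝕜) := by
  rw [← Algebra.algebraMap_eq_smul_one, ← cfc_const a C, ← cfc_const_mul_id b C, ← cfc_add _ _ _]
  exact hC.det_cfc _

lemma PosDef.re_det_pos {A : Matrix n n 𝕜} (hA : A.PosDef) : 0 < RCLike.re A.det :=
  (RCLike.pos_iff.mp hA.det_pos).1

lemma PosDef.ofReal_re_det {A : Matrix n n 𝕜} (hA : A.PosDef) :
    ((RCLike.re A.det : ℝ) : 𝕜) = A.det :=
  RCLike.conj_eq_iff_re.mp (RCLike.conj_eq_iff_im.mpr (RCLike.pos_iff.mp hA.det_pos).2)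

open scoped MatrixOrder in
/-- The `μ i` are the eigenvalues of `B` relative to `A`, i.e. those of `A^{-1/2} B A^{-1/2}`. -/
lemma PosDef.exists_re_det_smul_add_smul {A B : Matrix n n 𝕜} (hA : A.PosDef)
    (hB : B.PosSemidef) : ∃ μ : n → ℝ, (∀ i, 0 ≤ μ i) ∧ (B.PosDef → ∀ i, 0 < μ i) ∧
      ∀ a b : ℝ, RCLike.re (a • A + b • B).det = RCLike.re A.det * ∏ i, (a + b * μ i) := by
  obtain ⟨y, rfl⟩ := CStarAlgebra.nonneg_iff_eq_star_mul_self.mp hA.posSemidef.nonneg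
  have hy : IsUnit y.det := by
    simpa [isUnit_iff_isUnit_det, det_mul] using hA.isUnit
  set C := star y⁻¹ * B * y⁻¹
  have hC : C.PosSemidef := hB.conjTranspose_mul_mul_same _
  have hBC : B = star y * C * y := by
    simp only [C, ← mul_assoc, ← star_mul]
    simp [mul_assoc, nonsing_inv_mul _ hy]
  refine ⟨hC.isHermitian.eigenvalues, hC.eigenvalues_nonneg, fun hB_pos => ?_, fun a b => ?_⟩
  · have hC_pos : C.PosDef :=
      ((isUnit_iff_isUnit_det y).mpr hy).posDef_star_left_conjugate_iff.mp (hBC ▸ hB_pos)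
    exact hC_pos.eigenvalues_pos
  · have hpencil : a • (star y * y) + b • B = star y * (a • 1 + b • C) * y := by
      rw [hBC]
      simp only [Matrix.mul_add, Matrix.add_mul, Matrix.mul_smul, Matrix.smul_mul, Matrix.mul_one]
    rw [hpencil, det_mul, det_mul, mul_right_comm, ← det_mul,
      hC.isHermitian.det_smul_one_add_smul]
    nth_rewrite 1 [← hA.ofReal_re_det]
    rw [← RCLike.ofReal_prod, ← RCLike.ofReal_mul, RCLike.ofReal_re]

lemma PosDef.re_det_le_re_det_add {A B : Matrix n n 𝕜} (hA : A.PosDef) (hB : B.PosSemidef) :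
    RCLike.re A.det ≤ RCLike.re (A + B).det := by
  obtain ⟨μ, hμ, -, hdet⟩ := hA.exists_re_det_smul_add_smul hB
  have hprod : 1 ≤ ∏ i, (1 + 1 * μ i) := Finset.one_le_prod fun i _ => by linarith [hμ i]
  have h := hdet 1 1
  rw [one_smul, one_smul] at h
  rw [h]
  exact le_mul_of_one_le_right hA.re_det_pos.le hprod

lemma concaveOn_log_re_det :
    ConcaveOn ℝ {A : Matrix n n 𝕜 | A.PosDef} (fun A => Real.log (RCLike.re A.det)) := by
  refine concaveOn_iff_forall_pos.mpr ⟨convex_setOf_posDef, fun A hA B hB a b ha hb hab => ?_⟩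
  obtain ⟨μ, -, hμ, hdet⟩ := hA.exists_re_det_smul_add_smul hB.posSemidef
  replace hμ := hμ hB
  have hB_det : RCLike.re B.det = RCLike.re A.det * ∏ i, μ i := by simpa using hdet 0 1
  have hpos : ∀ i, 0 < a + b * μ i := fun i => by have := hμ i; positivity
  have hlog : ∀ i, b * Real.log (μ i) ≤ Real.log (a + b * μ i) := fun i => by
    simpa using strictConcaveOn_log_Ioi.concaveOn.2 (Set.mem_Ioi.mpr one_pos)
      (Set.mem_Ioi.mpr (hμ i)) ha.le hb.le hab
  simp only [smul_eq_mul]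
  rw [hdet, hB_det, Real.log_mul hA.re_det_pos.ne' (Finset.prod_pos fun i _ => hpos i).ne',
    Real.log_mul hA.re_det_pos.ne' (Finset.prod_pos fun i _ => (hμ i)).ne',
    Real.log_prod fun i _ => (hpos i).ne', Real.log_prod fun i _ => (hμ i).ne', mul_add,
    Finset.mul_sum]
  linear_combination (Finset.sum_le_sum fun i _ => hlog i) + Real.log (RCLike.re A.det) * hab

variable [Fintype m] [DecidableEq m]

/-- Error covariance of the linear estimate `Wᴴ y` of `x ~ CN(0, 1)` from `y = B x + z`,
`z ~ CN(0, M)` independent of `x`. -/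
def linearErrorCov (B W : Matrix n m 𝕜) (M : Matrix n n 𝕜) : Matrix m m 𝕜 :=
  (1 - Wᴴ * B) * (1 - Wᴴ * B)ᴴ + Wᴴ * M * W

noncomputable def mmseErrorCov (B : Matrix n m 𝕜) (M : Matrix n n 𝕜) : Matrix m m 𝕜 :=
  1 - Bᴴ * (M + B * Bᴴ)⁻¹ * B

omit [DecidableEq n] in
lemma linearErrorCov_smul_add_smul (B W : Matrix n m 𝕜) (M₁ M₂ : Matrix n n 𝕜) {a b : ℝ}
    (hab : a + b = 1) :
    linearErrorCov B W (a • M₁ + b • M₂)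
      = a • linearErrorCov B W M₁ + b • linearErrorCov B W M₂ := by
  simp only [linearErrorCov, Matrix.mul_add, Matrix.add_mul, Matrix.mul_smul, Matrix.smul_mul,
    smul_add]
  rw [add_add_add_comm, ← add_smul, hab, one_smul]

variable {B : Matrix n m 𝕜} {M : Matrix n n 𝕜}

omit [DecidableEq n] [DecidableEq m] in
lemma PosDef.add_mul_conjTranspose (hM : M.PosDef) (B : Matrix n m 𝕜) : (M + B * Bᴴ).PosDef :=
  hM.add_posSemidef (posSemidef_self_mul_conjTranspose B)

lemma linearErrorCov_eq_mmseErrorCov_add (hM : M.PosDef) (W : Matrix n m 𝕜) :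
    linearErrorCov B W M = mmseErrorCov B M
      + ((M + B * Bᴴ) * W - B)ᴴ * (M + B * Bᴴ)⁻¹ * ((M + B * Bᴴ) * W - B) := by
  set N := M + B * Bᴴ
  have hN : N.PosDef := hM.add_mul_conjTranspose B
  have : Invertible N := hN.isUnit.invertible
  have hMN : M = N - B * Bᴴ := by simp [N]
  rw [hMN]
  simp only [linearErrorCov, mmseErrorCov, conjTranspose_sub, conjTranspose_mul,
    conjTranspose_one, conjTranspose_conjTranspose, hN.isHermitian.eq, Matrix.sub_mul,
    Matrix.mul_sub, Matrix.mul_one, Matrix.one_mul, Matrix.mul_assoc,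
    Matrix.mul_inv_cancel_left_of_invertible, Matrix.inv_mul_cancel_left_of_invertible]
  abel_nf

lemma linearErrorCov_inv_mul (hM : M.PosDef) :
    linearErrorCov B ((M + B * Bᴴ)⁻¹ * B) M = mmseErrorCov B M := by
  have : Invertible (M + B * Bᴴ) := (hM.add_mul_conjTranspose B).isUnit.invertible
  simp [linearErrorCov_eq_mmseErrorCov_add hM]

lemma det_mmseErrorCov_mul_det (hM : M.PosDef) :
    (mmseErrorCov B M).det * (M + B * Bᴴ).det = M.det := by
  have hN := hM.add_mul_conjTranspose B
  have : Invertible (M + B * Bᴴ) := hN.isUnit.invertible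
  have h : 1 - B * (Bᴴ * (M + B * Bᴴ)⁻¹) = M * (M + B * Bᴴ)⁻¹ := by
    rw [← Matrix.mul_assoc, ← mul_inv_of_invertible (M + B * Bᴴ), ← Matrix.sub_mul]
    simp
  rw [mmseErrorCov, det_one_sub_mul_comm, h, det_mul, mul_assoc,
    det_nonsing_inv_mul_det _ hN.det_pos.ne'.isUnit, mul_one]

lemma posDef_mmseErrorCov (hM : M.PosDef) : (mmseErrorCov B M).PosDef := by
  have hpsd : (mmseErrorCov B M).PosSemidef := by
    rw [← linearErrorCov_inv_mul hM]
    exact (posSemidef_self_mul_conjTranspose _).add (hM.posSemidef.conjTranspose_mul_mul_same _)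
  rw [hpsd.posDef_iff_det_ne_zero]
  intro h0
  have h := det_mmseErrorCov_mul_det (B := B) hM
  rw [h0, zero_mul] at h
  exact hM.det_pos.ne' h.symm

lemma posDef_linearErrorCov (hM : M.PosDef) (W : Matrix n m 𝕜) :
    (linearErrorCov B W M).PosDef := by
  rw [linearErrorCov_eq_mmseErrorCov_add hM]
  exact (posDef_mmseErrorCov hM).add_posSemidef <|
    (hM.add_mul_conjTranspose B).inv.posSemidef.conjTranspose_mul_mul_same _

lemma log_re_det_mmseErrorCov_le (hM : M.PosDef) (W : Matrix n m 𝕜) :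
    Real.log (RCLike.re (mmseErrorCov B M).det)
      ≤ Real.log (RCLike.re (linearErrorCov B W M).det) := by
  have hE : (mmseErrorCov B M).PosDef := posDef_mmseErrorCov hM
  rw [linearErrorCov_eq_mmseErrorCov_add hM]
  exact Real.log_le_log hE.re_det_pos <| hE.re_det_le_re_det_add <|
    (hM.add_mul_conjTranspose B).inv.posSemidef.conjTranspose_mul_mul_same _

lemma log_re_det_add_sub_log_re_det (hM : M.PosDef) :
    Real.log (RCLike.re (M + B * Bᴴ).det) - Real.log (RCLike.re M.det)
      = -Real.log (RCLike.re (mmseErrorCov B M).det) := by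
  have hE : (mmseErrorCov B M).PosDef := posDef_mmseErrorCov hM
  have hN := hM.add_mul_conjTranspose B
  have h := det_mmseErrorCov_mul_det (B := B) hM
  rw [← hE.ofReal_re_det, ← hN.ofReal_re_det, ← hM.ofReal_re_det, ← RCLike.ofReal_mul,
    RCLike.ofReal_inj] at h
  rw [← h, Real.log_mul hE.re_det_pos.ne' hN.re_det_pos.ne']
  ring

open scoped MatrixOrder in
theorem convexOn_log_re_det_add_sub_log_re_det {P : Matrix n n 𝕜} (hP : P.PosSemidef) :
    ConvexOn ℝ {M : Matrix n n 𝕜 | M.PosDef}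
      (fun M => Real.log (RCLike.re (M + P).det) - Real.log (RCLike.re M.det)) := by
  obtain ⟨B, rfl⟩ : ∃ B : Matrix n n 𝕜, P = B * Bᴴ := by
    obtain ⟨y, rfl⟩ := CStarAlgebra.nonneg_iff_eq_star_mul_self.mp hP.nonneg
    exact ⟨yᴴ, by rw [conjTranspose_conjTranspose, star_eq_conjTranspose]⟩
  refine convexOn_iff_forall_pos.mpr ⟨convex_setOf_posDef, fun M₁ hM₁ M₂ hM₂ a b ha hb hab => ?_⟩
  have hM : (a • M₁ + b • M₂).PosDef := (hM₁.smul ha).add (hM₂.smul hb)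
  set W := (a • M₁ + b • M₂ + B * Bᴴ)⁻¹ * B
  have hconc := concaveOn_log_re_det.2 (posDef_linearErrorCov (B := B) hM₁ W)
    (posDef_linearErrorCov (B := B) hM₂ W) ha.le hb.le hab
  have h₁ := mul_le_mul_of_nonneg_left (log_re_det_mmseErrorCov_le (B := B) hM₁ W) ha.le
  have h₂ := mul_le_mul_of_nonneg_left (log_re_det_mmseErrorCov_le (B := B) hM₂ W) hb.le
  simp only [smul_eq_mul] at hconc ⊢
  rw [log_re_det_add_sub_log_re_det hM, log_re_det_add_sub_log_re_det hM₁,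
    log_re_det_add_sub_log_re_det hM₂, ← linearErrorCov_inv_mul hM,
    linearErrorCov_smul_add_smul _ _ _ _ hab]
  linarith

end Matrix

/-- For fixed `K̄ ⪰ 0` and channel matrices `H_r, H_e`, with `H_t = [H_r; H_e]` the
stacked matrix, the conditional mutual information `I(x; y_r | y_e)`, which for positive
definite noise covariance `K_Φ = [[I, Φ],[Φᴴ, I]]` equals
`log det(K_Φ + H_t K̄ H_tᴴ) − log det K_Φ − log det(I + H_e K̄ H_eᴴ)`,
is convex in `K_Φ` on the set of positive definite matrices of this block form. -/
theorem stmt_5 {nr ne nt : ℕ}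
    (Hr : Matrix (Fin nr) (Fin nt) ℂ) (He : Matrix (Fin ne) (Fin nt) ℂ)
    (Kbar : Matrix (Fin nt) (Fin nt) ℂ) (hK : Kbar.PosSemidef) :
    ConvexOn ℝ
      {M : Matrix (Fin nr ⊕ Fin ne) (Fin nr ⊕ Fin ne) ℂ |
        (∃ Φ : Matrix (Fin nr) (Fin ne) ℂ, M = Matrix.fromBlocks 1 Φ Φᴴ 1) ∧ M.PosDef}
      (fun M => Real.log ((M + (Matrix.fromRows Hr He) * Kbar * (Matrix.fromRows Hr He)ᴴ).det.re)
        - Real.log (M.det.re)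
        - Real.log (((1 : Matrix (Fin ne) (Fin ne) ℂ) + He * Kbar * Heᴴ).det.re)) :=
  ((convexOn_log_re_det_add_sub_log_re_det (hK.mul_mul_conjTranspose_same _)).subset
    (fun _ hM => hM.2) (convex_setOf_exists_eq_fromBlocks_one.inter convex_setOf_posDef)).sub
    (concaveOn_const _ (convex_setOf_exists_eq_fromBlocks_one.inter convex_setOf_posDef))
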